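/- Let χ be a nontrivial character of H(n+1, F_q) and let X = X(χ) be the unique element of B_q(n, n−1) with p(χ)(X̂) ≠ 0. Define the linear map λ(χ) : ℂ[B_q(X)] → ℂ[A_q(n+1)] on basis elements by Y ↦ q^{−dim Y} p(χ)(Ŷ) for subspaces Y ⊆ X. Then λ(χ) is injective, and for every v ∈ ℂ[B_q(X)] one has U_{n+1}(λ(χ)(v)) = λ(χ)(q · U_X(v)) and D_{n+1}(λ(χ)(v)) = λ(χ)(D_X(v)). In other words, λ(χ) is an isomorphism of the pair (ℂ[B_q(X)], qU_X) onto its image intertwined with U_{n+1}, and of (ℂ[B_q(X)], D_X) intertwined with D_{n+1}. -/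

import Mathlib

noncomputable instance (F : Type) [Field F] [Fintype F] (m : ℕ) :
    Fintype (Submodule F (Fin m → F)) := Fintype.ofFinite _

/-- The copy of `F^m` inside `F^n`: vectors whose coordinates of index `≥ m`
vanish. -/
def coordSpace (F : Type) [Field F] (n m : ℕ) : Submodule F (Fin n → F) where
  carrier := {v | ∀ i : Fin n, m ≤ (i : ℕ) → v i = 0}
  add_mem' := by
    intro a b ha hb i hi
    simp [ha i hi, hb i hi]
  zero_mem' := by intro i hi; rfl
  smul_mem' := by
    intro c v hv i hi
    simp [hv i hi]

/-- The element of the group `H(n+1, F_q)` with parameter `a ∈ F^n`. -/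
def hmat (F : Type) [Field F] (n : ℕ) (a : Fin n → F) :
    Matrix (Fin (n + 1)) (Fin (n + 1)) F :=
  fun i j =>
    if i = j then 1
    else if h : (i : ℕ) < n ∧ (j : ℕ) = n then a ⟨(i : ℕ), h.1⟩ else 0

/-- The element `p(χ)(X) = ∑_{g ∈ H(n+1,F_q)} conj(χ(g)) · (gX)` of the free complex
vector space on subspaces of `F^(n+1)`, realized as a complex-valued function. -/
noncomputable def pchi (F : Type) [Field F] [Fintype F] (n : ℕ)
    (χ : (Fin n → F) → ℂ) (X : Submodule F (Fin (n + 1) → F)) :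
    Submodule F (Fin (n + 1) → F) → ℂ :=
  open Classical in
  fun Y => ∑ a : Fin n → F,
    if Submodule.map (Matrix.mulVecLin (hmat F n a)) X = Y
    then (starRingEnd ℂ) (χ a) else 0

/-- `Ŷ`: the span of `Y ⊆ F^n ⊆ F^(n+1)` and the last standard basis vector. -/
def ehat (F : Type) [Field F] (n : ℕ) (Y : Submodule F (Fin (n + 1) → F)) :
    Submodule F (Fin (n + 1) → F) :=
  Y ⊔ Submodule.span F {Pi.single (Fin.last n) (1 : F)}

/-- The up operator `U_(n+1)` on `ℂ[B_q(n+1)]`. -/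
noncomputable def upOp (F : Type) [Field F] [Fintype F] (n : ℕ)
    (f : Submodule F (Fin (n + 1) → F) → ℂ) : Submodule F (Fin (n + 1) → F) → ℂ :=
  open Classical in
  fun Z => ∑ Y : Submodule F (Fin (n + 1) → F),
    if Y ≤ Z ∧ Module.finrank F Y + 1 = Module.finrank F Z then f Y else 0

/-- The down operator `D_(n+1)` on `ℂ[B_q(n+1)]`. -/
noncomputable def downOp (F : Type) [Field F] [Fintype F] (n : ℕ)
    (f : Submodule F (Fin (n + 1) → F) → ℂ) : Submodule F (Fin (n + 1) → F) → ℂ :=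
  open Classical in
  fun Z => ∑ Y : Submodule F (Fin (n + 1) → F),
    if Z ≤ Y ∧ Module.finrank F Z + 1 = Module.finrank F Y then f Y else 0

/-- The up operator `U_X` on `ℂ[B_q(X)]`, for `X ⊆ F^(n+1)`. -/
noncomputable def upOpX (F : Type) [Field F] [Fintype F] (n : ℕ)
    (X : Submodule F (Fin (n + 1) → F))
    (f : {Y : Submodule F (Fin (n + 1) → F) // Y ≤ X} → ℂ) :
    {Y : Submodule F (Fin (n + 1) → F) // Y ≤ X} → ℂ :=
  open Classical in
  fun Z =>
    letI : Fintype {Y : Submodule F (Fin (n + 1) → F) // Y ≤ X} :=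
      Fintype.ofFinite _
    ∑ Y : {Y : Submodule F (Fin (n + 1) → F) // Y ≤ X},
      if Y.1 ≤ Z.1 ∧ Module.finrank F Y.1 + 1 = Module.finrank F Z.1
      then f Y else 0

/-- The down operator `D_X` on `ℂ[B_q(X)]`, for `X ⊆ F^(n+1)`. -/
noncomputable def downOpX (F : Type) [Field F] [Fintype F] (n : ℕ)
    (X : Submodule F (Fin (n + 1) → F))
    (f : {Y : Submodule F (Fin (n + 1) → F) // Y ≤ X} → ℂ) :
    {Y : Submodule F (Fin (n + 1) → F) // Y ≤ X} → ℂ :=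
  open Classical in
  fun Z =>
    letI : Fintype {Y : Submodule F (Fin (n + 1) → F) // Y ≤ X} :=
      Fintype.ofFinite _
    ∑ Y : {Y : Submodule F (Fin (n + 1) → F) // Y ≤ X},
      if Z.1 ≤ Y.1 ∧ Module.finrank F Z.1 + 1 = Module.finrank F Y.1
      then f Y else 0

/-- The linear map `λ(χ) : ℂ[B_q(X)] → ℂ[A_q(n+1)]`, sending the basis element `Y`
to `q^(−dim Y) p(χ)(Ŷ)` and extended linearly. -/
noncomputable def lamChi (F : Type) [Field F] [Fintype F] (n : ℕ)
    (χ : (Fin n → F) → ℂ) (X : Submodule F (Fin (n + 1) → F))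
    (f : {Y : Submodule F (Fin (n + 1) → F) // Y ≤ X} → ℂ) :
    Submodule F (Fin (n + 1) → F) → ℂ :=
  fun Z =>
    letI : Fintype {Y : Submodule F (Fin (n + 1) → F) // Y ≤ X} :=
      Fintype.ofFinite _
    ∑ Y : {Y : Submodule F (Fin (n + 1) → F) // Y ≤ X},
      f Y * (Fintype.card F : ℂ) ^ (-(Module.finrank F Y.1 : ℤ)) *
        pchi F n χ (ehat F n Y.1) Z


namespace Aux
variable {F : Type} [Field F] {n : ℕ}

def iotaL (F : Type) [Field F] (n : ℕ) : (Fin n → F) →ₗ[F] (Fin (n+1) → F) where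
  toFun a := Fin.snoc a 0
  map_add' a b := by
    funext i
    refine Fin.lastCases ?_ ?_ i <;> simp
  map_smul' c a := by
    funext i
    refine Fin.lastCases ?_ ?_ i <;> simp

lemma iotaL_last (a : Fin n → F) : iotaL F n a (Fin.last n) = 0 := by
  simp [iotaL]

lemma iotaL_castSucc (a : Fin n → F) (j : Fin n) : iotaL F n a j.castSucc = a j := by
  simp [iotaL]

lemma mem_coord_iff (v : Fin (n+1) → F) :
    v ∈ coordSpace F (n+1) n ↔ v (Fin.last n) = 0 := by
  constructor
  · intro h; exact h (Fin.last n) (le_refl n)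
  · intro h i hi
    have : i = Fin.last n := by
      have h1 : (i : ℕ) ≤ n := Fin.is_le i
      exact Fin.ext (le_antisymm h1 hi)
    rw [this]; exact h

lemma iotaL_mem_coord (a : Fin n → F) : iotaL F n a ∈ coordSpace F (n+1) n := by
  rw [mem_coord_iff]; exact iotaL_last a

lemma range_iotaL : LinearMap.range (iotaL F n) = coordSpace F (n+1) n := by
  apply le_antisymm
  · rintro v ⟨a, rfl⟩; exact iotaL_mem_coord a
  · intro v hv
    refine ⟨Fin.init v, ?_⟩
    have h0 : v (Fin.last n) = 0 := (mem_coord_iff v).1 hv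
    show Fin.snoc (Fin.init v) 0 = v
    rw [← h0]; exact Fin.snoc_init_self v

lemma iotaL_inj : Function.Injective (iotaL F n) := by
  intro a b hab
  funext j
  have := congrFun hab j.castSucc
  simpa [iotaL] using this

lemma iotaL_of_lt (a : Fin n → F) (i : Fin (n+1)) (h : (i : ℕ) < n) :
    iotaL F n a i = a ⟨(i : ℕ), h⟩ := by
  simp only [iotaL, LinearMap.coe_mk, AddHom.coe_mk]
  rw [Fin.snoc]
  rw [dif_pos h]
  rfl

lemma gact (a : Fin n → F) (v : Fin (n+1) → F) :
    Matrix.mulVecLin (hmat F n a) v = v + v (Fin.last n) • iotaL F n a := by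
  funext i
  have key : ∀ j : Fin (n+1), hmat F n a i j * v j =
      (if j = i then v i else 0) +
      (if j = Fin.last n then (if i = Fin.last n then 0 else iotaL F n a i * v (Fin.last n)) else 0) := by
    intro j
    rcases eq_or_ne i j with hij | hij
    · subst hij
      rcases eq_or_ne i (Fin.last n) with hil | hil
      · subst hil; simp [hmat]
      · simp [hmat, hil]
    · rcases eq_or_ne j (Fin.last n) with hjl | hjl
      · subst hjl
        have hil : i ≠ Fin.last n := fun h => hij (h.trans rfl) |>.elim
        have hvn : (i : ℕ) ≠ n := fun h => hil (Fin.ext (by simpa using h))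
        have hlt : (i : ℕ) < n := lt_of_le_of_ne (Fin.is_le i) hvn
        have h1 : hmat F n a i (Fin.last n) = a ⟨(i:ℕ), hlt⟩ := by
          simp only [hmat, if_neg hij]
          rw [dif_pos ⟨hlt, by simp⟩]
        rw [h1, if_neg (Ne.symm hij), if_pos rfl, if_neg hil, iotaL_of_lt a i hlt, zero_add]
      · have h2 : hmat F n a i j = 0 := by
          simp only [hmat, if_neg hij]
          rw [dif_neg]
          rintro ⟨-, h⟩
          exact hjl (Fin.ext (by simpa using h))
        rw [h2, if_neg (Ne.symm hij), if_neg hjl, zero_mul, zero_add]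

  rw [Matrix.mulVecLin_apply, Matrix.mulVec, dotProduct]
  rw [Finset.sum_congr rfl (fun j _ => key j), Finset.sum_add_distrib]
  rw [Finset.sum_ite_eq' Finset.univ i (fun _ => v i), Finset.sum_ite_eq' Finset.univ (Fin.last n)
    (fun _ => if i = Fin.last n then 0 else iotaL F n a i * v (Fin.last n))]
  simp only [Finset.mem_univ, if_true, Pi.add_apply, Pi.smul_apply, smul_eq_mul]
  rcases eq_or_ne i (Fin.last n) with h | h
  · subst h; rw [if_pos rfl, iotaL_last, mul_zero]
  · rw [if_neg h, mul_comm]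

def evec (F : Type) [Field F] (n : ℕ) : Fin (n+1) → F := Pi.single (Fin.last n) 1

lemma evec_last : evec F n (Fin.last n) = 1 := Pi.single_eq_same _ _

lemma evec_not_mem_coord : evec F n ∉ coordSpace F (n+1) n := by
  rw [mem_coord_iff, evec_last]
  exact one_ne_zero

lemma map_fix (a : Fin n → F) (Y : Submodule F (Fin (n+1) → F))
    (hY : Y ≤ coordSpace F (n+1) n) :
    Submodule.map (Matrix.mulVecLin (hmat F n a)) Y = Y := by
  have hfix : ∀ v ∈ Y, Matrix.mulVecLin (hmat F n a) v = v := by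
    intro v hv
    rw [gact, (mem_coord_iff v).1 (hY hv), zero_smul, add_zero]
  apply le_antisymm
  · rintro w ⟨v, hv, rfl⟩
    rw [hfix v hv]; exact hv
  · intro v hv
    exact ⟨v, hv, hfix v hv⟩

lemma map_g_ehat (a : Fin n → F) (Y : Submodule F (Fin (n+1) → F))
    (hY : Y ≤ coordSpace F (n+1) n) :
    Submodule.map (Matrix.mulVecLin (hmat F n a)) (ehat F n Y)
      = Y ⊔ Submodule.span F {evec F n + iotaL F n a} := by
  rw [ehat, Submodule.map_sup, map_fix a Y hY, Submodule.map_span]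
  congr 2
  rw [Set.image_singleton]
  congr 1
  rw [gact]
  show evec F n + evec F n (Fin.last n) • iotaL F n a = _
  rw [evec_last, one_smul]

lemma last_sup_span (Y : Submodule F (Fin (n+1) → F)) (hY : Y ≤ coordSpace F (n+1) n)
    (b : Fin n → F) (v : Fin (n+1) → F)
    (hv : v ∈ Y ⊔ Submodule.span F {evec F n + iotaL F n b}) :
    v - v (Fin.last n) • (evec F n + iotaL F n b) ∈ Y := by
  rw [Submodule.mem_sup] at hv
  obtain ⟨y, hy, z, hz, rfl⟩ := hv
  rw [Submodule.mem_span_singleton] at hz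
  obtain ⟨t, rfl⟩ := hz
  have hyl : y (Fin.last n) = 0 := (mem_coord_iff y).1 (hY hy)
  have hlast : (y + t • (evec F n + iotaL F n b)) (Fin.last n) = t := by
    simp [hyl, evec_last, iotaL_last]
  rw [hlast]
  simpa using hy

lemma sup_span_eq_iff (Y Z : Submodule F (Fin (n+1) → F)) (hY : Y ≤ coordSpace F (n+1) n)
    (b : Fin n → F) :
    Y ⊔ Submodule.span F {evec F n + iotaL F n b} = Z ↔
      (Z ⊓ coordSpace F (n+1) n = Y ∧ evec F n + iotaL F n b ∈ Z) := by
  constructor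
  · rintro rfl
    refine ⟨le_antisymm ?_ (le_inf le_sup_left hY),
      Submodule.mem_sup_right (Submodule.mem_span_singleton_self _)⟩
    intro v hv
    rw [Submodule.mem_inf] at hv
    obtain ⟨hv1, hv2⟩ := hv
    have h := last_sup_span Y hY b v hv1
    rw [(mem_coord_iff v).1 hv2, zero_smul, sub_zero] at h
    exact h
  · rintro ⟨rfl, hb⟩
    apply le_antisymm
    · exact sup_le inf_le_left ((Submodule.span_singleton_le_iff_mem _ _).2 hb)
    · intro v hv
      rw [Submodule.mem_sup]
      refine ⟨v - v (Fin.last n) • (evec F n + iotaL F n b),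
        Submodule.mem_inf.mpr ⟨sub_mem hv (Submodule.smul_mem _ _ hb), ?_⟩,
        v (Fin.last n) • (evec F n + iotaL F n b), Submodule.smul_mem _ _ (Submodule.subset_span rfl), by abel⟩
      rw [mem_coord_iff]
      simp [evec_last, iotaL_last]

lemma mem_shift (Z : Submodule F (Fin (n+1) → F)) (c : Fin n → F)
    (hc : evec F n + iotaL F n c ∈ Z) (a : Fin n → F) :
    evec F n + iotaL F n a ∈ Z ↔ iotaL F n (a - c) ∈ Z := by
  have h : iotaL F n (a - c) = (evec F n + iotaL F n a) - (evec F n + iotaL F n c) := by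
    rw [map_sub]; abel
  rw [h]
  constructor
  · intro ha; exact sub_mem ha hc
  · intro hs
    have h3 := add_mem hs hc
    have h4 : evec F n + iotaL F n a - (evec F n + iotaL F n c) + (evec F n + iotaL F n c)
        = evec F n + iotaL F n a := by abel
    rwa [h4] at h3

lemma good_iff (Z : Submodule F (Fin (n+1) → F)) :
    (∃ c, evec F n + iotaL F n c ∈ Z) ↔ ¬ (Z ≤ coordSpace F (n+1) n) := by
  constructor
  · rintro ⟨c, hc⟩ hle
    have := (mem_coord_iff _).1 (hle hc)
    rw [Pi.add_apply, evec_last, iotaL_last, add_zero] at this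
    exact one_ne_zero this
  · intro h
    obtain ⟨z, hz, hzl⟩ : ∃ z ∈ Z, z (Fin.last n) ≠ 0 := by
      by_contra hco
      push_neg at hco
      exact h (fun z hz => (mem_coord_iff z).2 (hco z hz))
    refine ⟨Fin.init ((z (Fin.last n))⁻¹ • z), ?_⟩
    have hmem : (z (Fin.last n))⁻¹ • z ∈ Z := Submodule.smul_mem _ _ hz
    have hval : ((z (Fin.last n))⁻¹ • z) (Fin.last n) = 1 := by
      simp [inv_mul_cancel₀ hzl]
    have : evec F n + iotaL F n (Fin.init ((z (Fin.last n))⁻¹ • z)) = (z (Fin.last n))⁻¹ • z := by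
      funext i
      refine Fin.lastCases ?_ ?_ i
      · rw [Pi.add_apply, evec_last, iotaL_last, add_zero, hval]
      · intro j
        show evec F n j.castSucc + iotaL F n _ j.castSucc = _
        rw [iotaL_castSucc]
        have : evec F n j.castSucc = 0 := by
          rw [evec]
          exact Pi.single_eq_of_ne (Fin.castSucc_lt_last j).ne 1
        rw [this, zero_add]
        rfl
    rw [this]
    exact hmem

lemma finrank_sup_span (Y : Submodule F (Fin (n+1) → F)) (hY : Y ≤ coordSpace F (n+1) n)
    (b : Fin n → F) :
    Module.finrank F (Y ⊔ Submodule.span F {evec F n + iotaL F n b} : Submodule F (Fin (n+1) → F))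
      = Module.finrank F Y + 1 := by
  have hx : evec F n + iotaL F n b ≠ 0 := by
    intro h
    have := congrFun h (Fin.last n)
    rw [Pi.add_apply, evec_last, iotaL_last, add_zero] at this
    exact one_ne_zero this
  have hinf : Y ⊓ Submodule.span F {evec F n + iotaL F n b} = ⊥ := by
    rw [eq_bot_iff]
    intro v hv
    rw [Submodule.mem_inf] at hv
    obtain ⟨hv1, hv2⟩ := hv
    rw [Submodule.mem_span_singleton] at hv2
    obtain ⟨t, rfl⟩ := hv2
    have := (mem_coord_iff _).1 (hY hv1)
    rw [Pi.smul_apply, Pi.add_apply, evec_last, iotaL_last, add_zero, smul_eq_mul, mul_one] at this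
    rw [this, zero_smul]
    exact Submodule.zero_mem _
  have h := Submodule.finrank_sup_add_finrank_inf_eq Y (Submodule.span F {evec F n + iotaL F n b})
  rw [hinf, finrank_span_singleton hx] at h
  simpa using h

lemma finrank_good (Z : Submodule F (Fin (n+1) → F)) (c : Fin n → F)
    (hc : evec F n + iotaL F n c ∈ Z) :
    Module.finrank F Z = Module.finrank F (Z ⊓ coordSpace F (n+1) n : Submodule F (Fin (n+1) → F)) + 1 := by
  have h : (Z ⊓ coordSpace F (n+1) n) ⊔ Submodule.span F {evec F n + iotaL F n c} = Z :=
    (sup_span_eq_iff _ Z inf_le_right c).2 ⟨rfl, hc⟩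
  conv_lhs => rw [← h]
  exact finrank_sup_span _ inf_le_right c

section CharSums
variable [Fintype F] {χ : (Fin n → F) → ℂ}
open Classical in
lemma shift_sum (hhom : ∀ a b, χ (a + b) = χ a * χ b)
    (w : Fin n → F) (hw : χ w ≠ 1) (P : (Fin n → F) → Prop)
    (hP : ∀ a, P (a + w) ↔ P a) :
    ∑ a : Fin n → F, (if P a then (starRingEnd ℂ) (χ a) else 0) = 0 := by
  set T := ∑ a : Fin n → F, (if P a then (starRingEnd ℂ) (χ a) else 0) with hT
  have h1 : ∑ a : Fin n → F, (if P (a + w) then (starRingEnd ℂ) (χ (a + w)) else 0) = T :=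
    Equiv.sum_comp (Equiv.addRight w) (fun a => if P a then (starRingEnd ℂ) (χ a) else 0)
  have h2 : ∑ a : Fin n → F, (if P (a + w) then (starRingEnd ℂ) (χ (a + w)) else 0)
      = T * (starRingEnd ℂ) (χ w) := by
    rw [hT, Finset.sum_mul]
    refine Finset.sum_congr rfl (fun a _ => ?_)
    rw [hP a, hhom a w, map_mul]
    split_ifs
    · rfl
    · rw [zero_mul]
  have h3 : T * (1 - (starRingEnd ℂ) (χ w)) = 0 := by
    rw [mul_one_sub, ← h2, h1, sub_self]
  rcases mul_eq_zero.mp h3 with h | h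
  · exact h
  · exfalso
    apply hw
    have h4 : (starRingEnd ℂ) (χ w) = 1 := by
      have := sub_eq_zero.mp h
      exact this.symm
    have := congrArg (starRingEnd ℂ) h4
    simpa using this

open Classical in
lemma sum_conj_zero (hhom : ∀ a b, χ (a + b) = χ a * χ b)
    (hnt : ∃ a, χ a ≠ 1) :
    ∑ a : Fin n → F, (starRingEnd ℂ) (χ a) = 0 := by
  obtain ⟨w, hw⟩ := hnt
  have := shift_sum hhom w hw (fun _ => True) (fun a => Iff.rfl)
  simpa using this

open Classical in
lemma count_sum (hhom : ∀ a b, χ (a + b) = χ a * χ b)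
    (W : Submodule F (Fin (n+1) → F)) (hW : W ≤ coordSpace F (n+1) n)
    (htriv : ∀ a, iotaL F n a ∈ W → χ a = 1) :
    ∑ a : Fin n → F, (if iotaL F n a ∈ W then (starRingEnd ℂ) (χ a) else 0)
      = (Fintype.card F : ℂ) ^ (Module.finrank F W) := by
  have h1 : ∑ a : Fin n → F, (if iotaL F n a ∈ W then (starRingEnd ℂ) (χ a) else 0)
      = ∑ a : Fin n → F, (if iotaL F n a ∈ W then (1:ℂ) else 0) := by
    refine Finset.sum_congr rfl (fun a _ => ?_)
    split_ifs with h
    · rw [htriv a h, map_one]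
    · rfl
  rw [h1]
  rw [Finset.sum_boole]
  have h2 : (Finset.univ.filter (fun a => iotaL F n a ∈ W)).card
      = Fintype.card (Submodule.comap (iotaL F n) W) := by
    rw [← Fintype.card_subtype]
    exact (Fintype.card_congr (Equiv.subtypeEquivRight (fun a => Iff.rfl))).symm
  have h3 : Fintype.card (Submodule.comap (iotaL F n) W)
      = Fintype.card F ^ Module.finrank F (Submodule.comap (iotaL F n) W) :=
    Module.card_eq_pow_finrank
  have h4 : Module.finrank F (Submodule.comap (iotaL F n) W) = Module.finrank F W := by
    have hmap : Submodule.map (iotaL F n) (Submodule.comap (iotaL F n) W) = W := by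
      rw [Submodule.map_comap_eq, range_iotaL, inf_eq_right.mpr hW]
    conv_rhs => rw [← hmap]
    exact (Submodule.equivMapOfInjective (iotaL F n) iotaL_inj _).finrank_eq
  rw [h2, h3, h4]
  push_cast
  ring
end CharSums

section More
variable [Fintype F] {χ : (Fin n → F) → ℂ}

open Classical in
lemma sum_e_mem (hhom : ∀ a b, χ (a + b) = χ a * χ b)
    (Z : Submodule F (Fin (n+1) → F)) (c : Fin n → F)
    (hc : evec F n + iotaL F n c ∈ Z) :
    ∑ a : Fin n → F, (if evec F n + iotaL F n a ∈ Z then (starRingEnd ℂ) (χ a) else 0)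
      = (starRingEnd ℂ) (χ c) *
        ∑ a : Fin n → F, (if iotaL F n a ∈ Z ⊓ coordSpace F (n+1) n then (starRingEnd ℂ) (χ a) else 0) := by
  rw [← Equiv.sum_comp (Equiv.addRight c)
    (fun a => if evec F n + iotaL F n a ∈ Z then (starRingEnd ℂ) (χ a) else 0), Finset.mul_sum]
  refine Finset.sum_congr rfl (fun a _ => ?_)
  have h1 : evec F n + iotaL F n (a + c) = (evec F n + iotaL F n c) + iotaL F n a := by
    rw [map_add]; abel
  have h2 : evec F n + iotaL F n ((Equiv.addRight c) a) ∈ Z ↔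
      iotaL F n a ∈ Z ⊓ coordSpace F (n+1) n := by
    show evec F n + iotaL F n (a + c) ∈ Z ↔ _
    rw [h1, Submodule.mem_inf]
    constructor
    · intro h
      have := sub_mem h hc
      simp only [add_sub_cancel_left] at this
      exact ⟨this, iotaL_mem_coord a⟩
    · intro h
      exact add_mem hc h.1
  by_cases h : iotaL F n a ∈ Z ⊓ coordSpace F (n+1) n
  · rw [if_pos (h2.mpr h), if_pos h]
    simp only [Equiv.coe_addRight]
    rw [hhom a c, map_mul]; ring
  · rw [if_neg (fun hh => h (h2.mp hh)), if_neg h, mul_zero]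

open Classical in
lemma sum_e_mem_zero (hhom : ∀ a b, χ (a + b) = χ a * χ b)
    (Z : Submodule F (Fin (n+1) → F)) (w : Fin n → F)
    (hw : iotaL F n w ∈ Z) (hχ : χ w ≠ 1) :
    ∑ a : Fin n → F, (if evec F n + iotaL F n a ∈ Z then (starRingEnd ℂ) (χ a) else 0) = 0 := by
  refine shift_sum hhom w hχ _ (fun a => ?_)
  have h1 : evec F n + iotaL F n (a + w) = (evec F n + iotaL F n a) + iotaL F n w := by
    rw [map_add]; abel
  rw [h1]
  constructor
  · intro h
    have := sub_mem h hw
    simpa using this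
  · intro h
    exact add_mem h hw

open Classical in
lemma pchi_eq (Z Y : Submodule F (Fin (n+1) → F)) (hY : Y ≤ coordSpace F (n+1) n) :
    pchi F n χ (ehat F n Y) Z = ∑ a : Fin n → F,
      (if Y ⊔ Submodule.span F {evec F n + iotaL F n a} = Z then (starRingEnd ℂ) (χ a) else 0) := by
  rw [pchi]
  refine Finset.sum_congr rfl (fun a _ => ?_)
  rw [map_g_ehat a Y hY]

lemma exists_chi_ne (hn : 1 ≤ n) (hhom : ∀ a b, χ (a + b) = χ a * χ b)
    (hnt : ∃ a, χ a ≠ 1) (X : Submodule F (Fin (n+1) → F))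
    (hX1 : X ≤ coordSpace F (n+1) n) (hX2 : Module.finrank F X = n - 1)
    (htrivX : ∀ w, iotaL F n w ∈ X → χ w = 1)
    (W : Submodule F (Fin (n+1) → F)) (hW : W ≤ coordSpace F (n+1) n)
    (hWX : ¬ W ≤ X) :
    ∃ w, iotaL F n w ∈ W ∧ χ w ≠ 1 := by
  by_contra hcon
  push_neg at hcon
  obtain ⟨v, hvW, hvX⟩ := SetLike.not_le_iff_exists.mp hWX
  have hvC : v ∈ coordSpace F (n+1) n := hW hvW
  have hiv : iotaL F n (Fin.init v) = v := by
    show Fin.snoc (Fin.init v) 0 = v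
    rw [← (mem_coord_iff v).1 hvC]
    exact Fin.snoc_init_self v
  set w₀ := Fin.init v with hw₀def
  set X' := Submodule.comap (iotaL F n) X with hX'def
  have hfr : Module.finrank F X' = n - 1 := by
    have hmap : Submodule.map (iotaL F n) X' = X := by
      rw [hX'def, Submodule.map_comap_eq, range_iotaL, inf_eq_right.mpr hX1]
    have := (Submodule.equivMapOfInjective (iotaL F n) iotaL_inj X').finrank_eq
    rw [hmap] at this
    rw [this, hX2]
  have hw₀X' : w₀ ∉ X' := by
    rw [hX'def, Submodule.mem_comap, hiv]
    exact hvX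
  have hw₀0 : w₀ ≠ 0 := by
    intro h
    apply hvX
    rw [← hiv, h, map_zero]
    exact Submodule.zero_mem X
  have hinf : X' ⊓ Submodule.span F {w₀} = ⊥ := by
    rw [eq_bot_iff]
    intro u hu
    rw [Submodule.mem_inf] at hu
    obtain ⟨hu1, hu2⟩ := hu
    rw [Submodule.mem_span_singleton] at hu2
    obtain ⟨t, rfl⟩ := hu2
    rcases eq_or_ne t 0 with rfl | ht
    · rw [zero_smul]; exact Submodule.zero_mem _
    · exfalso
      apply hw₀X'
      have := Submodule.smul_mem X' t⁻¹ hu1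
      rwa [smul_smul, inv_mul_cancel₀ ht, one_smul] at this
  have hsup : Module.finrank F (X' ⊔ Submodule.span F {w₀} : Submodule F (Fin n → F)) = n := by
    have h := Submodule.finrank_sup_add_finrank_inf_eq X' (Submodule.span F {w₀})
    rw [hinf, finrank_span_singleton hw₀0, hfr] at h
    simp only [finrank_bot, add_zero] at h
    omega
  have htop : X' ⊔ Submodule.span F {w₀} = ⊤ :=
    Submodule.eq_top_of_finrank_eq (by rw [hsup, Module.finrank_fin_fun])
  obtain ⟨u, hu⟩ := hnt
  apply hu
  have humem : u ∈ X' ⊔ Submodule.span F {w₀} := htop ▸ Submodule.mem_top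
  rw [Submodule.mem_sup] at humem
  obtain ⟨x, hx, z, hz, rfl⟩ := humem
  rw [Submodule.mem_span_singleton] at hz
  obtain ⟨t, rfl⟩ := hz
  rw [hhom]
  have h1 : χ x = 1 := htrivX x hx
  have h2 : χ (t • w₀) = 1 := by
    apply hcon
    rw [map_smul, hiv]
    exact Submodule.smul_mem W t hvW
  rw [h1, h2, one_mul]
end More

section Generic
lemma collapseL {ι₁ ι₂ κ : Type*} [Fintype ι₁] [Fintype ι₂] [Fintype κ]
    (p : κ → Prop) (h : ι₁ → ι₂ → κ) (u : ι₁ → ℂ) (c : ι₂ → ℂ)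
    {dp : (W : κ) → Decidable (p W)} {de : (i : ι₁) → (j : ι₂) → (W : κ) → Decidable (h i j = W)} :
    ∑ W : κ, (@ite _ (p W) (dp W) (∑ i : ι₁, u i * ∑ j : ι₂, (@ite _ (h i j = W) (de i j W) (c j) 0)) 0)
      = ∑ i : ι₁, u i * ∑ j : ι₂, (@ite _ (p (h i j)) (dp (h i j)) (c j) 0) := by
  have stepA : ∀ W : κ, (@ite _ (p W) (dp W) (∑ i : ι₁, u i * ∑ j : ι₂, (@ite _ (h i j = W) (de i j W) (c j) 0)) 0)
      = ∑ i : ι₁, ∑ j : ι₂, (@ite _ (h i j = W) (de i j W) (@ite _ (p W) (dp W) (u i * c j) 0) 0) := by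
    intro W
    by_cases hp : p W
    · rw [if_pos hp]
      refine Finset.sum_congr rfl (fun i _ => ?_)
      rw [Finset.mul_sum]
      refine Finset.sum_congr rfl (fun j _ => ?_)
      rw [if_pos hp, mul_ite, mul_zero]
    · rw [if_neg hp]
      symm
      refine Finset.sum_eq_zero (fun i _ => Finset.sum_eq_zero (fun j _ => ?_))
      rw [if_neg hp]
      split_ifs <;> rfl
  rw [Finset.sum_congr rfl (fun W _ => stepA W), Finset.sum_comm]
  refine Finset.sum_congr rfl (fun i _ => ?_)
  rw [Finset.sum_comm, Finset.mul_sum]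
  refine Finset.sum_congr rfl (fun j _ => ?_)
  have hcol : ∑ W : κ, (@ite _ (h i j = W) (de i j W) (@ite _ (p W) (dp W) (u i * c j) 0) 0)
      = @ite _ (p (h i j)) (dp (h i j)) (u i * c j) 0 := by
    rw [Finset.sum_eq_single_of_mem (h i j) (Finset.mem_univ _)
      (fun W _ hW => if_neg (fun hh => hW hh.symm)), if_pos rfl]
  rw [hcol, mul_ite, mul_zero]

lemma expandR {ι₁ ι₂ : Type*} [Fintype ι₁] [Fintype ι₂]
    (c' : ι₁ → ι₂ → Prop) (f : ι₁ → ℂ) (v : ι₂ → ℂ)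
    {dc : (i : ι₁) → (j : ι₂) → Decidable (c' i j)} :
    ∑ j : ι₂, (∑ i : ι₁, @ite _ (c' i j) (dc i j) (f i) 0) * v j
      = ∑ i : ι₁, ∑ j : ι₂, (@ite _ (c' i j) (dc i j) (f i * v j) 0) := by
  rw [Finset.sum_comm]
  refine Finset.sum_congr rfl (fun j _ => ?_)
  rw [Finset.sum_mul]
  refine Finset.sum_congr rfl (fun i _ => ?_)
  rw [ite_mul, zero_mul]
lemma rearr (a b c d : ℂ) : a * b * c * d = b * (a * c * d) := by ring
end Generic

section Parts
variable [Fintype F] {χ : (Fin n → F) → ℂ}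

open Classical in
lemma up_part (hn : 1 ≤ n) (hhom : ∀ a b, χ (a + b) = χ a * χ b)
    (hnt : ∃ a, χ a ≠ 1) (X : Submodule F (Fin (n+1) → F))
    (hX1 : X ≤ coordSpace F (n+1) n) (hX2 : Module.finrank F X = n - 1)
    (htrivX : ∀ w, iotaL F n w ∈ X → χ w = 1)
    (f : {Y : Submodule F (Fin (n + 1) → F) // Y ≤ X} → ℂ) :
    upOp F n (lamChi F n χ X f) =
      lamChi F n χ X ((Fintype.card F : ℂ) • upOpX F n X f) := by
  classical
  letI instS : Fintype {Y : Submodule F (Fin (n + 1) → F) // Y ≤ X} := Fintype.ofFinite _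
  funext Z
  simp only [upOp, lamChi, upOpX, Pi.smul_apply, smul_eq_mul]
  set q : ℂ := (Fintype.card F : ℂ) with hqdef
  have hq0 : q ≠ 0 := Nat.cast_ne_zero.mpr Fintype.card_ne_zero
  -- rewrite pchi everywhere
  rw [show (∑ W : Submodule F (Fin (n+1) → F),
      if W ≤ Z ∧ Module.finrank F W + 1 = Module.finrank F Z then
        ∑ Y : {Y : Submodule F (Fin (n + 1) → F) // Y ≤ X},
          f Y * q ^ (-(Module.finrank F Y.1 : ℤ)) * pchi F n χ (ehat F n Y.1) W
      else 0)
    = ∑ W : Submodule F (Fin (n+1) → F),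
      if W ≤ Z ∧ Module.finrank F W + 1 = Module.finrank F Z then
        ∑ Y : {Y : Submodule F (Fin (n + 1) → F) // Y ≤ X},
          (f Y * q ^ (-(Module.finrank F Y.1 : ℤ))) *
            ∑ a : Fin n → F, (if Y.1 ⊔ Submodule.span F {evec F n + iotaL F n a} = W
              then (starRingEnd ℂ) (χ a) else 0)
      else 0 from Finset.sum_congr rfl fun W _ => by
        by_cases hp : W ≤ Z ∧ Module.finrank F W + 1 = Module.finrank F Z
        · simp only [if_pos hp]
          exact Finset.sum_congr rfl fun Y _ => by
            rw [pchi_eq W Y.1 (le_trans Y.2 hX1)]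
        · simp only [if_neg hp]]
  refine Eq.trans (collapseL (fun W => W ≤ Z ∧ Module.finrank F W + 1 = Module.finrank F Z)
    (fun (Y : {Y : Submodule F (Fin (n + 1) → F) // Y ≤ X}) (a : Fin n → F) =>
      Y.1 ⊔ Submodule.span F {evec F n + iotaL F n a})
    (fun Y => f Y * q ^ (-(Module.finrank F Y.1 : ℤ)))
    (fun a => (starRingEnd ℂ) (χ a))) ?_
  conv_rhs => enter [2, x]; rw [pchi_eq Z x.1 (le_trans x.2 hX1)]
  conv_rhs => enter [2, x]; rw [rearr]
  refine Eq.trans ?_ (expandR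
    (fun (Y x : {Y : Submodule F (Fin (n + 1) → F) // Y ≤ X}) =>
      Y.1 ≤ x.1 ∧ Module.finrank F Y.1 + 1 = Module.finrank F x.1)
    f
    (fun x => q * q ^ (-(Module.finrank F x.1 : ℤ)) *
      ∑ a : Fin n → F, (if x.1 ⊔ Submodule.span F {evec F n + iotaL F n a} = Z
        then (starRingEnd ℂ) (χ a) else 0))).symm
  refine Finset.sum_congr rfl (fun Y _ => ?_)
  by_cases hgood : ∃ c, evec F n + iotaL F n c ∈ Z
  · obtain ⟨c, hc⟩ := hgood
    have hYC : Y.1 ≤ coordSpace F (n+1) n := le_trans Y.2 hX1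
    have hfrkZ : Module.finrank F Z
        = Module.finrank F (Z ⊓ coordSpace F (n+1) n : Submodule F (Fin (n+1) → F)) + 1 :=
      finrank_good Z c hc
    set ZC : Submodule F (Fin (n+1) → F) := Z ⊓ coordSpace F (n+1) n with hZC
    have hAcond : ∀ a : Fin n → F,
        ((Y.1 ⊔ Submodule.span F {evec F n + iotaL F n a} ≤ Z ∧
          Module.finrank F (Y.1 ⊔ Submodule.span F {evec F n + iotaL F n a} :
            Submodule F (Fin (n+1) → F)) + 1 = Module.finrank F Z)) ↔
        ((Y.1 ≤ ZC ∧ Module.finrank F Y.1 + 1 = Module.finrank F ZC) ∧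
          evec F n + iotaL F n a ∈ Z) := by
      intro a
      rw [finrank_sup_span Y.1 hYC a, hfrkZ]
      constructor
      · rintro ⟨h1, h2⟩
        have hm : evec F n + iotaL F n a ∈ Z :=
          h1 (Submodule.mem_sup_right (Submodule.mem_span_singleton_self _))
        have hYZ : Y.1 ≤ Z := le_trans le_sup_left h1
        exact ⟨⟨le_inf hYZ hYC, by omega⟩, hm⟩
      · rintro ⟨⟨h1, h2⟩, hm⟩
        refine ⟨sup_le (le_trans h1 inf_le_left)
          ((Submodule.span_singleton_le_iff_mem _ _).2 hm), by omega⟩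
    have hA : (∑ a : Fin n → F,
        if Y.1 ⊔ Submodule.span F {evec F n + iotaL F n a} ≤ Z ∧
          Module.finrank F (Y.1 ⊔ Submodule.span F {evec F n + iotaL F n a} :
            Submodule F (Fin (n+1) → F)) + 1 = Module.finrank F Z
        then (starRingEnd ℂ) (χ a) else 0)
        = if Y.1 ≤ ZC ∧ Module.finrank F Y.1 + 1 = Module.finrank F ZC
          then (∑ a : Fin n → F, if evec F n + iotaL F n a ∈ Z
            then (starRingEnd ℂ) (χ a) else 0) else 0 := by
      by_cases hP : Y.1 ≤ ZC ∧ Module.finrank F Y.1 + 1 = Module.finrank F ZC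
      · rw [if_pos hP]
        refine Finset.sum_congr rfl (fun a _ => ?_)
        exact if_congr ((hAcond a).trans (and_iff_right hP)) rfl rfl
      · rw [if_neg hP]
        refine Finset.sum_eq_zero (fun a _ => ?_)
        exact if_neg (fun hcon => hP ((hAcond a).1 hcon).1)
    rw [hA]
    have hB : ∀ x : {Y : Submodule F (Fin (n + 1) → F) // Y ≤ X},
        (∑ a : Fin n → F, if x.1 ⊔ Submodule.span F {evec F n + iotaL F n a} = Z
          then (starRingEnd ℂ) (χ a) else 0)
        = if ZC = x.1 then (∑ a : Fin n → F, if evec F n + iotaL F n a ∈ Z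
            then (starRingEnd ℂ) (χ a) else 0) else 0 := by
      intro x
      by_cases hx : ZC = x.1
      · rw [if_pos hx]
        refine Finset.sum_congr rfl (fun a _ => ?_)
        refine if_congr ?_ rfl rfl
        rw [sup_span_eq_iff x.1 Z (le_trans x.2 hX1) a, ← hZC, ← hx]
        exact and_iff_right rfl
      · rw [if_neg hx]
        refine Finset.sum_eq_zero (fun a _ => ?_)
        refine if_neg (fun hcon => hx ?_)
        exact ((sup_span_eq_iff x.1 Z (le_trans x.2 hX1) a).1 hcon).1
    by_cases hZX : ZC ≤ X
    · symm
      refine Eq.trans (Finset.sum_eq_single_of_mem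
        (⟨ZC, hZX⟩ : {Y : Submodule F (Fin (n + 1) → F) // Y ≤ X})
        (Finset.mem_univ _) (fun x _ hx => ?_)) ?_
      · by_cases hcx : Y.1 ≤ x.1 ∧ Module.finrank F Y.1 + 1 = Module.finrank F x.1
        · rw [if_pos hcx, hB x, if_neg (fun hh => hx (Subtype.ext hh.symm))]
          ring
        · rw [if_neg hcx]
      symm
      rw [hB ⟨ZC, hZX⟩, if_pos rfl]
      by_cases hP : Y.1 ≤ ZC ∧ Module.finrank F Y.1 + 1 = Module.finrank F ZC
      · rw [if_pos hP, if_pos (show Y.1 ≤ (⟨ZC, hZX⟩ : {Y : Submodule F (Fin (n + 1) → F) // Y ≤ X}).1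
          ∧ Module.finrank F Y.1 + 1
            = Module.finrank F (⟨ZC, hZX⟩ : {Y : Submodule F (Fin (n + 1) → F) // Y ≤ X}).1 from hP)]
        have h2 : Module.finrank F (⟨ZC, hZX⟩ : {Y : Submodule F (Fin (n + 1) → F) // Y ≤ X}).1
            = Module.finrank F Y.1 + 1 := hP.2.symm
        rw [h2]
        have hqq : q * q ^ (-((Module.finrank F Y.1 + 1 : ℕ) : ℤ)) = q ^ (-(Module.finrank F Y.1 : ℤ)) := by
          have hexp : (-((Module.finrank F Y.1 + 1 : ℕ) : ℤ)) = -(Module.finrank F Y.1 : ℤ) + (-1) := by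
            push_cast; ring
          rw [hexp, zpow_add₀ hq0, zpow_neg_one]
          calc q * (q ^ (-(Module.finrank F Y.1 : ℤ)) * q⁻¹)
              = q ^ (-(Module.finrank F Y.1 : ℤ)) * (q * q⁻¹) := by ring
            _ = q ^ (-(Module.finrank F Y.1 : ℤ)) := by rw [mul_inv_cancel₀ hq0, mul_one]
        rw [hqq]
        ring
      · rw [if_neg hP, if_neg (fun hcon => hP hcon)]
        rw [mul_zero]
    · have hS0 : (∑ a : Fin n → F, if evec F n + iotaL F n a ∈ Z
          then (starRingEnd ℂ) (χ a) else 0) = 0 := by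
        obtain ⟨w, hwZC, hwχ⟩ := exists_chi_ne hn hhom hnt X hX1 hX2 htrivX ZC inf_le_right hZX
        exact sum_e_mem_zero hhom Z w (Submodule.mem_inf.1 hwZC).1 hwχ
      rw [hS0, ite_self, mul_zero]
      symm
      refine Finset.sum_eq_zero (fun x _ => ?_)
      by_cases hcx : Y.1 ≤ x.1 ∧ Module.finrank F Y.1 + 1 = Module.finrank F x.1
      · rw [if_pos hcx, hB x, if_neg (fun hh => hZX (by rw [hh]; exact x.2))]
        ring
      · rw [if_neg hcx]
  · have hA0 : (∑ a : Fin n → F,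
        if Y.1 ⊔ Submodule.span F {evec F n + iotaL F n a} ≤ Z ∧
          Module.finrank F (Y.1 ⊔ Submodule.span F {evec F n + iotaL F n a} :
            Submodule F (Fin (n+1) → F)) + 1 = Module.finrank F Z
        then (starRingEnd ℂ) (χ a) else 0) = 0 :=
      Finset.sum_eq_zero (fun a _ => if_neg (fun hcon => hgood
        ⟨a, hcon.1 (Submodule.mem_sup_right (Submodule.mem_span_singleton_self _))⟩))
    rw [hA0, mul_zero]
    symm
    refine Finset.sum_eq_zero (fun x _ => ?_)
    have hBx : (∑ a : Fin n → F, if x.1 ⊔ Submodule.span F {evec F n + iotaL F n a} = Z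
        then (starRingEnd ℂ) (χ a) else 0) = 0 :=
      Finset.sum_eq_zero (fun a _ => if_neg (fun hcon => hgood
        ⟨a, by rw [← hcon]; exact Submodule.mem_sup_right (Submodule.mem_span_singleton_self _)⟩))
    rw [hBx]
    split_ifs
    · ring
    · rfl

open Classical in
lemma down_part (hn : 1 ≤ n) (hhom : ∀ a b, χ (a + b) = χ a * χ b)
    (hnt : ∃ a, χ a ≠ 1) (X : Submodule F (Fin (n+1) → F))
    (hX1 : X ≤ coordSpace F (n+1) n) (hX2 : Module.finrank F X = n - 1)
    (htrivX : ∀ w, iotaL F n w ∈ X → χ w = 1)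
    (f : {Y : Submodule F (Fin (n + 1) → F) // Y ≤ X} → ℂ) :
    downOp F n (lamChi F n χ X f) = lamChi F n χ X (downOpX F n X f) := by
  classical
  letI instS : Fintype {Y : Submodule F (Fin (n + 1) → F) // Y ≤ X} := Fintype.ofFinite _
  funext Z
  simp only [downOp, lamChi, downOpX]
  set q : ℂ := (Fintype.card F : ℂ) with hqdef
  have hq0 : q ≠ 0 := Nat.cast_ne_zero.mpr Fintype.card_ne_zero
  have hqc : ∀ d : ℕ, q ^ (-(d : ℤ)) * q ^ (d : ℕ) = 1 := by
    intro d
    rw [← zpow_natCast q d, ← zpow_add₀ hq0]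
    simp
  rw [show (∑ W : Submodule F (Fin (n+1) → F),
      if Z ≤ W ∧ Module.finrank F Z + 1 = Module.finrank F W then
        ∑ Y : {Y : Submodule F (Fin (n + 1) → F) // Y ≤ X},
          f Y * q ^ (-(Module.finrank F Y.1 : ℤ)) * pchi F n χ (ehat F n Y.1) W
      else 0)
    = ∑ W : Submodule F (Fin (n+1) → F),
      if Z ≤ W ∧ Module.finrank F Z + 1 = Module.finrank F W then
        ∑ Y : {Y : Submodule F (Fin (n + 1) → F) // Y ≤ X},
          (f Y * q ^ (-(Module.finrank F Y.1 : ℤ))) *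
            ∑ a : Fin n → F, (if Y.1 ⊔ Submodule.span F {evec F n + iotaL F n a} = W
              then (starRingEnd ℂ) (χ a) else 0)
      else 0 from Finset.sum_congr rfl fun W _ => by
        by_cases hp : Z ≤ W ∧ Module.finrank F Z + 1 = Module.finrank F W
        · simp only [if_pos hp]
          exact Finset.sum_congr rfl fun Y _ => by
            rw [pchi_eq W Y.1 (le_trans Y.2 hX1)]
        · simp only [if_neg hp]]
  refine Eq.trans (collapseL (fun W => Z ≤ W ∧ Module.finrank F Z + 1 = Module.finrank F W)
    (fun (Y : {Y : Submodule F (Fin (n + 1) → F) // Y ≤ X}) (a : Fin n → F) =>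
      Y.1 ⊔ Submodule.span F {evec F n + iotaL F n a})
    (fun Y => f Y * q ^ (-(Module.finrank F Y.1 : ℤ)))
    (fun a => (starRingEnd ℂ) (χ a))) ?_
  conv_rhs => enter [2, x]; rw [pchi_eq Z x.1 (le_trans x.2 hX1)]
  conv_rhs => enter [2, x]; rw [mul_assoc]
  refine Eq.trans ?_ (expandR
    (fun (Y x : {Y : Submodule F (Fin (n + 1) → F) // Y ≤ X}) =>
      x.1 ≤ Y.1 ∧ Module.finrank F x.1 + 1 = Module.finrank F Y.1)
    f
    (fun x => q ^ (-(Module.finrank F x.1 : ℤ)) *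
      ∑ a : Fin n → F, (if x.1 ⊔ Submodule.span F {evec F n + iotaL F n a} = Z
        then (starRingEnd ℂ) (χ a) else 0))).symm
  · refine Finset.sum_congr rfl (fun Y _ => ?_)
    have hYC : Y.1 ≤ coordSpace F (n+1) n := le_trans Y.2 hX1
    have hYsup : ∀ a : Fin n → F,
        (Y.1 ⊔ Submodule.span F {evec F n + iotaL F n a}) ⊓ coordSpace F (n+1) n = Y.1 :=
      fun a => ((sup_span_eq_iff Y.1 _ hYC a).1 rfl).1
    by_cases hgood : ∃ c, evec F n + iotaL F n c ∈ Z
    · obtain ⟨c, hc⟩ := hgood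
      have hfrkZ : Module.finrank F Z
          = Module.finrank F (Z ⊓ coordSpace F (n+1) n : Submodule F (Fin (n+1) → F)) + 1 :=
        finrank_good Z c hc
      set ZC : Submodule F (Fin (n+1) → F) := Z ⊓ coordSpace F (n+1) n with hZC
      have hZeq : ZC ⊔ Submodule.span F {evec F n + iotaL F n c} = Z :=
        (sup_span_eq_iff ZC Z inf_le_right c).2 ⟨rfl, hc⟩
      have hAcond : ∀ a : Fin n → F,
          ((Z ≤ Y.1 ⊔ Submodule.span F {evec F n + iotaL F n a} ∧
            Module.finrank F Z + 1 = Module.finrank F (Y.1 ⊔ Submodule.span F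
              {evec F n + iotaL F n a} : Submodule F (Fin (n+1) → F)))) ↔
          ((ZC ≤ Y.1 ∧ Module.finrank F ZC + 1 = Module.finrank F Y.1) ∧
            iotaL F n (c - a) ∈ Y.1) := by
        intro a
        have hmemYa : evec F n + iotaL F n a ∈ Y.1 ⊔ Submodule.span F {evec F n + iotaL F n a} :=
          Submodule.mem_sup_right (Submodule.mem_span_singleton_self _)
        rw [finrank_sup_span Y.1 hYC a, hfrkZ, ← hZeq, sup_le_iff,
          Submodule.span_singleton_le_iff_mem]
        constructor
        · rintro ⟨⟨h1, h2⟩, h3⟩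
          have hZCY : ZC ≤ Y.1 := by
            intro v hv
            rw [← hYsup a]
            exact Submodule.mem_inf.2 ⟨h1 hv, (Submodule.mem_inf.1 hv).2⟩
          have h4 : iotaL F n (c - a) ∈ Y.1 ⊔ Submodule.span F {evec F n + iotaL F n a} :=
            (mem_shift _ a hmemYa c).1 h2
          have h5 : iotaL F n (c - a) ∈ Y.1 := by
            rw [← hYsup a]
            exact Submodule.mem_inf.2 ⟨h4, iotaL_mem_coord _⟩
          exact ⟨⟨hZCY, by omega⟩, h5⟩
        · rintro ⟨⟨h1, h2⟩, h3⟩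
          refine ⟨⟨le_trans h1 le_sup_left, ?_⟩, by omega⟩
          exact (mem_shift _ a hmemYa c).2 (Submodule.mem_sup_left h3)
      have hA : (∑ a : Fin n → F,
          if Z ≤ Y.1 ⊔ Submodule.span F {evec F n + iotaL F n a} ∧
            Module.finrank F Z + 1 = Module.finrank F (Y.1 ⊔ Submodule.span F
              {evec F n + iotaL F n a} : Submodule F (Fin (n+1) → F))
          then (starRingEnd ℂ) (χ a) else 0)
          = if ZC ≤ Y.1 ∧ Module.finrank F ZC + 1 = Module.finrank F Y.1
            then (∑ a : Fin n → F, if iotaL F n (c - a) ∈ Y.1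
              then (starRingEnd ℂ) (χ a) else 0) else 0 := by
        by_cases hP : ZC ≤ Y.1 ∧ Module.finrank F ZC + 1 = Module.finrank F Y.1
        · rw [if_pos hP]
          refine Finset.sum_congr rfl (fun a _ => ?_)
          exact if_congr ((hAcond a).trans (and_iff_right hP)) rfl rfl
        · rw [if_neg hP]
          refine Finset.sum_eq_zero (fun a _ => ?_)
          exact if_neg (fun hcon => hP ((hAcond a).1 hcon).1)
      have hT : (∑ a : Fin n → F, if iotaL F n (c - a) ∈ Y.1
          then (starRingEnd ℂ) (χ a) else 0)
          = (starRingEnd ℂ) (χ c) * q ^ (Module.finrank F Y.1 : ℕ) := by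
        rw [← Equiv.sum_comp (Equiv.subLeft c)
          (fun a => if iotaL F n (c - a) ∈ Y.1 then (starRingEnd ℂ) (χ a) else 0)]
        have h1 : ∀ a : Fin n → F, (if iotaL F n (c - (Equiv.subLeft c) a) ∈ Y.1
            then (starRingEnd ℂ) (χ ((Equiv.subLeft c) a)) else 0)
            = (starRingEnd ℂ) (χ c) * (if iotaL F n a ∈ Y.1 then (starRingEnd ℂ) (χ a) else 0) := by
          intro a
          have hsub : c - (Equiv.subLeft c) a = a := by
            show c - (c - a) = a
            abel
          rw [hsub]
          by_cases hmem : iotaL F n a ∈ Y.1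
          · rw [if_pos hmem, if_pos hmem]
            have ha1 : χ a = 1 := htrivX a (Y.2 hmem)
            have hca : χ ((Equiv.subLeft c) a) = χ c := by
              have := hhom (c - a) a
              rw [sub_add_cancel, ha1, mul_one] at this
              exact this.symm
            rw [hca, ha1, map_one, mul_one]
          · rw [if_neg hmem, if_neg hmem, mul_zero]
        rw [Finset.sum_congr rfl (fun a _ => h1 a), ← Finset.mul_sum,
          count_sum hhom Y.1 hYC (fun a ha => htrivX a (Y.2 ha))]
      rw [hA]
      have hB : ∀ x : {Y : Submodule F (Fin (n + 1) → F) // Y ≤ X},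
          (∑ a : Fin n → F, if x.1 ⊔ Submodule.span F {evec F n + iotaL F n a} = Z
            then (starRingEnd ℂ) (χ a) else 0)
          = if ZC = x.1 then (∑ a : Fin n → F, if evec F n + iotaL F n a ∈ Z
              then (starRingEnd ℂ) (χ a) else 0) else 0 := by
        intro x
        by_cases hx : ZC = x.1
        · rw [if_pos hx]
          refine Finset.sum_congr rfl (fun a _ => ?_)
          refine if_congr ?_ rfl rfl
          rw [sup_span_eq_iff x.1 Z (le_trans x.2 hX1) a, ← hZC, ← hx]
          exact and_iff_right rfl
        · rw [if_neg hx]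
          refine Finset.sum_eq_zero (fun a _ => ?_)
          refine if_neg (fun hcon => hx ?_)
          exact ((sup_span_eq_iff x.1 Z (le_trans x.2 hX1) a).1 hcon).1
      by_cases hZX : ZC ≤ X
      · have hS : (∑ a : Fin n → F, if evec F n + iotaL F n a ∈ Z
            then (starRingEnd ℂ) (χ a) else 0)
            = (starRingEnd ℂ) (χ c) * q ^ (Module.finrank F ZC : ℕ) := by
          rw [sum_e_mem hhom Z c hc, ← hZC,
            count_sum hhom ZC inf_le_right (fun a ha => htrivX a (hZX ha))]
        symm
        refine Eq.trans (Finset.sum_eq_single_of_mem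
          (⟨ZC, hZX⟩ : {Y : Submodule F (Fin (n + 1) → F) // Y ≤ X})
          (Finset.mem_univ _) (fun x _ hx => ?_)) ?_
        · by_cases hcx : x.1 ≤ Y.1 ∧ Module.finrank F x.1 + 1 = Module.finrank F Y.1
          · rw [if_pos hcx, hB x, if_neg (fun hh => hx (Subtype.ext hh.symm))]
            ring
          · rw [if_neg hcx]
        symm
        rw [hB ⟨ZC, hZX⟩, if_pos rfl, hS]
        by_cases hP : ZC ≤ Y.1 ∧ Module.finrank F ZC + 1 = Module.finrank F Y.1
        · rw [if_pos hP, hT, if_pos (show (⟨ZC, hZX⟩ : {Y : Submodule F (Fin (n + 1) → F) // Y ≤ X}).1 ≤ Y.1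
            ∧ Module.finrank F (⟨ZC, hZX⟩ : {Y : Submodule F (Fin (n + 1) → F) // Y ≤ X}).1 + 1
              = Module.finrank F Y.1 from hP)]
          have e1 : f Y * q ^ (-(Module.finrank F Y.1 : ℤ)) *
              ((starRingEnd ℂ) (χ c) * q ^ (Module.finrank F Y.1 : ℕ))
              = f Y * (starRingEnd ℂ) (χ c) := by
            linear_combination f Y * (starRingEnd ℂ) (χ c) * hqc (Module.finrank F Y.1)
          have e2 : f Y * (q ^ (-(Module.finrank F
              (⟨ZC, hZX⟩ : {Y : Submodule F (Fin (n + 1) → F) // Y ≤ X}).1 : ℤ)) *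
              ((starRingEnd ℂ) (χ c) * q ^ (Module.finrank F ZC : ℕ)))
              = f Y * (starRingEnd ℂ) (χ c) := by
            linear_combination f Y * (starRingEnd ℂ) (χ c) * hqc (Module.finrank F ZC)
          rw [e1, e2]
        · rw [if_neg hP, if_neg (fun hcon => hP hcon), mul_zero]
      · have hA0 : (if ZC ≤ Y.1 ∧ Module.finrank F ZC + 1 = Module.finrank F Y.1
            then (∑ a : Fin n → F, if iotaL F n (c - a) ∈ Y.1
              then (starRingEnd ℂ) (χ a) else 0) else 0) = 0 :=
          if_neg (fun hcon => hZX (le_trans hcon.1 Y.2))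
        rw [hA0, mul_zero]
        symm
        refine Finset.sum_eq_zero (fun x _ => ?_)
        by_cases hcx : x.1 ≤ Y.1 ∧ Module.finrank F x.1 + 1 = Module.finrank F Y.1
        · rw [if_pos hcx, hB x, if_neg (fun hh => hZX (by rw [hh]; exact x.2))]
          ring
        · rw [if_neg hcx]
    · have hZleC : Z ≤ coordSpace F (n+1) n := by
        by_contra h
        exact hgood ((good_iff Z).2 h)
      have hAcond : ∀ a : Fin n → F,
          ((Z ≤ Y.1 ⊔ Submodule.span F {evec F n + iotaL F n a} ∧
            Module.finrank F Z + 1 = Module.finrank F (Y.1 ⊔ Submodule.span F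
              {evec F n + iotaL F n a} : Submodule F (Fin (n+1) → F)))) ↔
          (Z ≤ Y.1 ∧ Module.finrank F Z + 1 = Module.finrank F Y.1 + 1) := by
        intro a
        rw [finrank_sup_span Y.1 hYC a]
        constructor
        · rintro ⟨h1, h2⟩
          refine ⟨?_, h2⟩
          intro v hv
          rw [← hYsup a]
          exact Submodule.mem_inf.2 ⟨h1 hv, hZleC hv⟩
        · rintro ⟨h1, h2⟩
          exact ⟨le_trans h1 le_sup_left, h2⟩
      have hA0 : (∑ a : Fin n → F,
          if Z ≤ Y.1 ⊔ Submodule.span F {evec F n + iotaL F n a} ∧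
            Module.finrank F Z + 1 = Module.finrank F (Y.1 ⊔ Submodule.span F
              {evec F n + iotaL F n a} : Submodule F (Fin (n+1) → F))
          then (starRingEnd ℂ) (χ a) else 0) = 0 := by
        by_cases hP : Z ≤ Y.1 ∧ Module.finrank F Z + 1 = Module.finrank F Y.1 + 1
        · rw [Finset.sum_congr rfl (fun a _ => if_pos ((hAcond a).2 hP))]
          exact sum_conj_zero hhom hnt
        · refine Finset.sum_eq_zero (fun a _ => ?_)
          exact if_neg (fun hcon => hP ((hAcond a).1 hcon))
      rw [hA0, mul_zero]
      symm
      refine Finset.sum_eq_zero (fun x _ => ?_)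
      have hBx : (∑ a : Fin n → F, if x.1 ⊔ Submodule.span F {evec F n + iotaL F n a} = Z
          then (starRingEnd ℂ) (χ a) else 0) = 0 :=
        Finset.sum_eq_zero (fun a _ => if_neg (fun hcon => hgood
          ⟨a, by rw [← hcon]; exact Submodule.mem_sup_right (Submodule.mem_span_singleton_self _)⟩))
      rw [hBx]
      split_ifs
      · ring
      · rfl


open Classical in
lemma htrivX_of (hhom : ∀ a b, χ (a + b) = χ a * χ b)
    (X : Submodule F (Fin (n+1) → F)) (hX1 : X ≤ coordSpace F (n+1) n)
    (hX3 : pchi F n χ (ehat F n X) ≠ 0) :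
    ∀ w, iotaL F n w ∈ X → χ w = 1 := by
  by_contra hcon
  push_neg at hcon
  obtain ⟨w, hwX, hwχ⟩ := hcon
  apply hX3
  funext Z
  rw [Pi.zero_apply, pchi_eq Z X hX1]
  refine shift_sum hhom w hwχ
    (fun a => X ⊔ Submodule.span F {evec F n + iotaL F n a} = Z) (fun a => ?_)
  rw [sup_span_eq_iff X Z hX1 (a+w), sup_span_eq_iff X Z hX1 a]
  constructor
  · rintro ⟨h1, h2⟩
    refine ⟨h1, ?_⟩
    have hwZ : iotaL F n w ∈ Z := by
      have : iotaL F n w ∈ Z ⊓ coordSpace F (n+1) n := by rw [h1]; exact hwX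
      exact (Submodule.mem_inf.1 this).1
    have heq : evec F n + iotaL F n a = (evec F n + iotaL F n (a + w)) - iotaL F n w := by
      rw [map_add]; abel
    rw [heq]
    exact sub_mem h2 hwZ
  · rintro ⟨h1, h2⟩
    refine ⟨h1, ?_⟩
    have hwZ : iotaL F n w ∈ Z := by
      have : iotaL F n w ∈ Z ⊓ coordSpace F (n+1) n := by rw [h1]; exact hwX
      exact (Submodule.mem_inf.1 this).1
    have heq : evec F n + iotaL F n (a + w) = (evec F n + iotaL F n a) + iotaL F n w := by
      rw [map_add]; abel
    rw [heq]
    exact add_mem h2 hwZ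

open Classical in
lemma lamChi_ehat (hhom : ∀ a b, χ (a + b) = χ a * χ b)
    (X : Submodule F (Fin (n+1) → F)) (hX1 : X ≤ coordSpace F (n+1) n)
    (htrivX : ∀ w, iotaL F n w ∈ X → χ w = 1)
    (f : {Y : Submodule F (Fin (n + 1) → F) // Y ≤ X} → ℂ)
    (Y₀ : {Y : Submodule F (Fin (n + 1) → F) // Y ≤ X}) :
    lamChi F n χ X f (ehat F n Y₀.1) = f Y₀ := by
  classical
  letI instS : Fintype {Y : Submodule F (Fin (n + 1) → F) // Y ≤ X} := Fintype.ofFinite _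
  simp only [lamChi]
  set q : ℂ := (Fintype.card F : ℂ) with hqdef
  have hq0 : q ≠ 0 := Nat.cast_ne_zero.mpr Fintype.card_ne_zero
  have hqc : ∀ d : ℕ, q ^ (-(d : ℤ)) * q ^ (d : ℕ) = 1 := by
    intro d
    rw [← zpow_natCast q d, ← zpow_add₀ hq0]
    simp
  conv_lhs => enter [2, Y]; rw [pchi_eq (ehat F n Y₀.1) Y.1 (le_trans Y.2 hX1)]
  have hY₀C : Y₀.1 ≤ coordSpace F (n+1) n := le_trans Y₀.2 hX1
  have he : Y₀.1 ⊔ Submodule.span F {evec F n + iotaL F n 0} = ehat F n Y₀.1 := by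
    rw [map_zero, add_zero]
    rfl
  have hprop := (sup_span_eq_iff Y₀.1 (ehat F n Y₀.1) hY₀C 0).1 he
  refine Eq.trans (Finset.sum_eq_single_of_mem Y₀ (Finset.mem_univ _) (fun Y _ hY => ?_)) ?_
  · have hz : (∑ a : Fin n → F, if Y.1 ⊔ Submodule.span F {evec F n + iotaL F n a} = ehat F n Y₀.1
        then (starRingEnd ℂ) (χ a) else 0) = 0 := by
      refine Finset.sum_eq_zero (fun a _ => if_neg (fun hcon => hY (Subtype.ext ?_)))
      have h1 := ((sup_span_eq_iff Y.1 (ehat F n Y₀.1) (le_trans Y.2 hX1) a).1 hcon).1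
      exact h1.symm.trans hprop.1
    rw [hz, mul_zero]
  · have hsum : (∑ a : Fin n → F, if Y₀.1 ⊔ Submodule.span F {evec F n + iotaL F n a} = ehat F n Y₀.1
        then (starRingEnd ℂ) (χ a) else 0)
        = ∑ a : Fin n → F, (if iotaL F n a ∈ Y₀.1 then (starRingEnd ℂ) (χ a) else 0) := by
      refine Finset.sum_congr rfl (fun a _ => if_congr ?_ rfl rfl)
      rw [sup_span_eq_iff Y₀.1 (ehat F n Y₀.1) hY₀C a]
      constructor
      · rintro ⟨h1, h2⟩
        have h3 : iotaL F n (a - 0) ∈ ehat F n Y₀.1 := (mem_shift _ 0 hprop.2 a).1 h2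
        rw [sub_zero] at h3
        have h4 : iotaL F n a ∈ ehat F n Y₀.1 ⊓ coordSpace F (n+1) n :=
          Submodule.mem_inf.2 ⟨h3, iotaL_mem_coord a⟩
        rw [hprop.1] at h4
        exact h4
      · intro hmem
        refine ⟨hprop.1, ?_⟩
        refine (mem_shift _ 0 hprop.2 a).2 ?_
        rw [sub_zero]
        have : Y₀.1 ≤ ehat F n Y₀.1 := le_sup_left
        exact this hmem
    rw [hsum, count_sum hhom Y₀.1 hY₀C (fun a ha => htrivX a (Y₀.2 ha))]
    linear_combination f Y₀ * hqc (Module.finrank F Y₀.1)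

end Parts

end Aux

/-- For a nontrivial character `χ` of `H(n+1, F_q)` and `X = X(χ)`, the map `λ(χ)`
is injective, and it intertwines `q·U_X` with `U_(n+1)` and `D_X` with `D_(n+1)`. -/
theorem lamChi_intertwines (F : Type) [Field F] [Fintype F] (n : ℕ) (hn : 1 ≤ n)
    (χ : (Fin n → F) → ℂ) (hhom : ∀ a b, χ (a + b) = χ a * χ b) (h0 : χ 0 = 1)
    (hnt : ∃ a, χ a ≠ 1) (X : Submodule F (Fin (n + 1) → F))
    (hX1 : X ≤ coordSpace F (n + 1) n) (hX2 : Module.finrank F X = n - 1)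
    (hX3 : pchi F n χ (ehat F n X) ≠ 0) :
    Function.Injective (lamChi F n χ X) ∧
    (∀ f : {Y : Submodule F (Fin (n + 1) → F) // Y ≤ X} → ℂ,
      upOp F n (lamChi F n χ X f) =
        lamChi F n χ X ((Fintype.card F : ℂ) • upOpX F n X f)) ∧
    (∀ f : {Y : Submodule F (Fin (n + 1) → F) // Y ≤ X} → ℂ,
      downOp F n (lamChi F n χ X f) = lamChi F n χ X (downOpX F n X f)) := by
  classical
  have htrivX : ∀ w, Aux.iotaL F n w ∈ X → χ w = 1 := Aux.htrivX_of hhom X hX1 hX3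
  refine ⟨?_, fun f => Aux.up_part hn hhom hnt X hX1 hX2 htrivX f,
    fun f => Aux.down_part hn hhom hnt X hX1 hX2 htrivX f⟩
  intro f g h
  funext Y₀
  rw [← Aux.lamChi_ehat hhom X hX1 htrivX f Y₀, ← Aux.lamChi_ehat hhom X hX1 htrivX g Y₀, h]
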